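/- arXiv:1508.02242 — 3 statements merged into one kernel-verified Lean document; each statement's English description precedes it below -/
import Mathlib

section
/- For all natural numbers k and p with 1 ≤ k ≤ p, the factorial ratio satisfies (p−k)!/(p+k)! ≤ e^{2k+1} · p^{−2k}, where the inequality is between real numbers and e is Euler's number. -/
/-!
With `N = p + k` and `q = p - k = N - 2k`, it suffices (as `p ≤ N`) that `q! N^{2k} ≤ e^{2k} N!`.
This is proved by induction on the gap `d = N - q`: raising `N` to `N + 1` multiplies the left
side by `(N+1)^{d+1} / N^d`, which is at most `e (N+1)` because `(1 + 1/N)^d ≤ e^{d/N} ≤ e`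
for `d ≤ N`.
-/

open Nat Real

theorem add_one_pow_le_exp_one_mul_pow {x : ℝ} {d : ℕ} (hd : (d : ℝ) ≤ x) :
    (x + 1) ^ d ≤ exp 1 * x ^ d := by
  rcases d.eq_zero_or_pos with rfl | hd_pos
  · simp
  have hx : 0 < x := lt_of_lt_of_le (by exact_mod_cast hd_pos) hd
  calc (x + 1) ^ d = (1 + x⁻¹) ^ d * x ^ d := by
        rw [← mul_pow, add_mul, inv_mul_cancel₀ hx.ne', one_mul, add_comm]
    _ ≤ exp x⁻¹ ^ d * x ^ d := by
        gcongr
        linarith [add_one_le_exp x⁻¹]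
    _ = exp (d * x⁻¹) * x ^ d := by rw [exp_nat_mul]
    _ ≤ exp 1 * x ^ d := by
        gcongr
        rw [← div_eq_mul_inv]
        exact div_le_one_of_le₀ hd hx.le

theorem factorial_mul_pow_le_exp_one_pow_mul_factorial (m d : ℕ) :
    (m ! : ℝ) * ((m + d : ℕ) : ℝ) ^ d ≤ exp 1 ^ d * ((m + d)! : ℝ) := by
  induction d with
  | zero => simp
  | succ d ih =>
    have hgap : (d : ℝ) ≤ ((m + d : ℕ) : ℝ) := by exact_mod_cast Nat.le_add_left d m
    have hsucc : ((m + (d + 1) : ℕ) : ℝ) = ((m + d : ℕ) : ℝ) + 1 := by push_cast; ring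
    calc (m ! : ℝ) * ((m + (d + 1) : ℕ) : ℝ) ^ (d + 1)
        = (m ! : ℝ) * (((m + d : ℕ) : ℝ) + 1) ^ d * (((m + d : ℕ) : ℝ) + 1) := by
          rw [hsucc, pow_succ, mul_assoc]
      _ ≤ (m ! : ℝ) * (exp 1 * ((m + d : ℕ) : ℝ) ^ d) * (((m + d : ℕ) : ℝ) + 1) := by
          gcongr
          exact add_one_pow_le_exp_one_mul_pow hgap
      _ = exp 1 * ((m ! : ℝ) * ((m + d : ℕ) : ℝ) ^ d) * (((m + d : ℕ) : ℝ) + 1) := by ring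
      _ ≤ exp 1 * (exp 1 ^ d * ((m + d)! : ℝ)) * (((m + d : ℕ) : ℝ) + 1) := by gcongr
      _ = exp 1 ^ (d + 1) * ((m + (d + 1))! : ℝ) := by
          rw [← add_assoc, factorial_succ, Nat.cast_mul, Nat.cast_succ]; ring

/-- For all natural numbers `k` and `p` with `1 ≤ k ≤ p`, the factorial
ratio satisfies `(p−k)!/(p+k)! ≤ e^{2k+1} · p^{−2k}` (as real numbers), where `e` is
Euler's number. -/
theorem factorial_ratio_le_exp_mul_pow (k p : ℕ) (hk : 1 ≤ k) (hkp : k ≤ p) :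
    ((Nat.factorial (p - k) : ℝ) / (Nat.factorial (p + k) : ℝ)) ≤
      Real.exp 1 ^ (2 * k + 1) * (p : ℝ) ^ (-(2 * k : ℤ)) := by
  have hN : p - k + 2 * k = p + k := by omega
  have hp : (0 : ℝ) < p := by exact_mod_cast hk.trans hkp
  have hfact := factorial_mul_pow_le_exp_one_pow_mul_factorial (p - k) (2 * k)
  rw [hN] at hfact
  have hzpow : (p : ℝ) ^ (-(2 * k : ℤ)) = ((p : ℝ) ^ (2 * k))⁻¹ := by
    rw [zpow_neg]; norm_cast
  rw [hzpow, ← div_eq_mul_inv, div_le_div_iff₀ (by positivity) (by positivity)]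
  calc ((p - k)! : ℝ) * (p : ℝ) ^ (2 * k)
      ≤ ((p - k)! : ℝ) * ((p + k : ℕ) : ℝ) ^ (2 * k) := by
        gcongr
        exact_mod_cast Nat.le_add_right p k
    _ ≤ exp 1 ^ (2 * k) * ((p + k)! : ℝ) := hfact
    _ ≤ exp 1 ^ (2 * k + 1) * ((p + k)! : ℝ) := by
        gcongr
        · exact one_le_exp zero_le_one
        · omega
end

section
/- For all natural numbers k and p with 1 ≤ k ≤ p, it holds that 2·( (p−k)!/(p+k)! + (1/(p(p+1)))·(p−k+1)!/(p+k−1)! ) ≤ e^{2k+1} · p^{−2k}, where the inequality is between real numbers and e is Euler's number. -/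
open Finset

private lemma pow_mul_fact_le_descFactorial (k p : ℕ) (hkp : k ≤ p) :
    p ^ k * k.factorial ≤ k ^ k * p.descFactorial k := by
  have h1 : p ^ k * k.factorial = ∏ i ∈ range k, p * (k - i) := by
    rw [← Finset.prod_range_add_one_eq_factorial, Finset.prod_mul_distrib,
      Finset.prod_const, Finset.card_range]
    congr 1
    rw [← Finset.prod_range_reflect]
    apply Finset.prod_congr rfl
    intro i hi
    have : i < k := Finset.mem_range.mp hi
    omega
  have h2 : k ^ k * p.descFactorial k = ∏ i ∈ range k, k * (p - i) := by
    rw [Nat.descFactorial_eq_prod_range, Finset.prod_mul_distrib,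
      Finset.prod_const, Finset.card_range]
  rw [h1, h2]
  apply Finset.prod_le_prod
  · intro i _; positivity
  · intro i hi
    have hik : i < k := Finset.mem_range.mp hi
    have ha : p * (k - i) = p * k - p * i := by rw [Nat.mul_sub]
    have hb : k * (p - i) = p * k - k * i := by rw [Nat.mul_sub, Nat.mul_comm k p]
    have hc : k * i ≤ p * i := Nat.mul_le_mul_right i hkp
    omega

private lemma N1 (k p : ℕ) (hkp : k ≤ p) :
    p ^ k * k.factorial * (p - k).factorial ≤ k ^ k * p.factorial := by
  have h := pow_mul_fact_le_descFactorial k p hkp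
  have h2 : (p - k).factorial * p.descFactorial k = p.factorial :=
    Nat.factorial_mul_descFactorial hkp
  calc p ^ k * k.factorial * (p - k).factorial
      ≤ k ^ k * p.descFactorial k * (p - k).factorial :=
        Nat.mul_le_mul_right _ h
    _ = k ^ k * ((p - k).factorial * p.descFactorial k) := by ring
    _ = k ^ k * p.factorial := by rw [h2]

private lemma E (k : ℕ) : (k : ℝ) ^ k ≤ Real.exp 1 ^ k * k.factorial := by
  have hsum := Real.sum_le_exp_of_nonneg (x := (k : ℝ)) (by positivity) (k + 1)
  have hsingle := Finset.single_le_sum (f := fun i => (k : ℝ) ^ i / i.factorial)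
    (fun i _ => by positivity) (Finset.self_mem_range_succ k)
  have h : (k : ℝ) ^ k / k.factorial ≤ Real.exp k := le_trans hsingle hsum
  have hexp : Real.exp (k : ℝ) = Real.exp 1 ^ k := by
    rw [← Real.exp_nat_mul, mul_one]
  rw [hexp, div_le_iff₀ (by positivity : (0:ℝ) < (k.factorial : ℝ))] at h
  exact h

private lemma A_le (k p : ℕ) (hk : 1 ≤ k) (hkp : k ≤ p) :
    ((p - k).factorial : ℝ) / ((p + k).factorial : ℝ) ≤
      Real.exp 1 ^ k / (p : ℝ) ^ (2 * k) := by
  have hp : 1 ≤ p := hk.trans hkp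
  have hP : (0 : ℝ) < p := by exact_mod_cast hp
  rw [div_le_div_iff₀ (by positivity) (by positivity)]
  have hN1 : ((p : ℝ)) ^ k * k.factorial * (p - k).factorial ≤ (k : ℝ) ^ k * p.factorial := by
    exact_mod_cast N1 k p hkp
  have hE := E k
  have hN3 : ((p : ℝ)) ^ k * p.factorial ≤ ((p + k).factorial : ℝ) := by
    have h0 := Nat.factorial_mul_pow_le_factorial (m := p) (n := k)
    have h' : p.factorial * p ^ k ≤ (p + k).factorial :=
      le_trans (Nat.mul_le_mul_left _ (Nat.pow_le_pow_left (Nat.le_succ p) k)) h0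
    calc ((p : ℝ)) ^ k * p.factorial = ((p.factorial * p ^ k : ℕ) : ℝ) := by push_cast; ring
      _ ≤ ((p + k).factorial : ℝ) := by exact_mod_cast h'
  have hkf : (0 : ℝ) < k.factorial := by positivity
  have hpk : (0 : ℝ) ≤ (p : ℝ) ^ k := by positivity
  refine le_of_mul_le_mul_right ?_ hkf
  have h2k : ((p - k).factorial : ℝ) * (p : ℝ) ^ (2 * k) * k.factorial
      = (p : ℝ) ^ k * ((p : ℝ) ^ k * k.factorial * (p - k).factorial) := by
    rw [two_mul, pow_add]; ring
  rw [h2k]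
  calc (p : ℝ) ^ k * ((p : ℝ) ^ k * k.factorial * (p - k).factorial)
      ≤ (p : ℝ) ^ k * ((k : ℝ) ^ k * p.factorial) :=
        mul_le_mul_of_nonneg_left hN1 hpk
    _ ≤ (p : ℝ) ^ k * (Real.exp 1 ^ k * k.factorial * p.factorial) :=
        mul_le_mul_of_nonneg_left
          (mul_le_mul_of_nonneg_right hE (by positivity)) hpk
    _ = Real.exp 1 ^ k * k.factorial * ((p : ℝ) ^ k * p.factorial) := by ring
    _ ≤ Real.exp 1 ^ k * k.factorial * ((p + k).factorial : ℝ) :=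
        mul_le_mul_of_nonneg_left hN3 (by positivity)
    _ = Real.exp 1 ^ k * ((p + k).factorial : ℝ) * k.factorial := by ring

/-- For all natural numbers `k` and `p` with `1 ≤ k ≤ p`,
`2·( (p−k)!/(p+k)! + (1/(p(p+1)))·(p−k+1)!/(p+k−1)! ) ≤ e^{2k+1} · p^{−2k}`
as real numbers, where `e` is Euler's number. -/
theorem schwab_bound_le_exp_mul_pow (k p : ℕ) (hk : 1 ≤ k) (hkp : k ≤ p) :
    2 * ((Nat.factorial (p - k) : ℝ) / (Nat.factorial (p + k) : ℝ) +
        (1 / ((p : ℝ) * ((p : ℝ) + 1))) *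
          ((Nat.factorial (p - k + 1) : ℝ) / (Nat.factorial (p + k - 1) : ℝ))) ≤
      Real.exp 1 ^ (2 * k + 1) * (p : ℝ) ^ (-(2 * k : ℤ)) := by
  have hA := A_le k p hk hkp
  obtain ⟨j, rfl⟩ : ∃ j, k = j + 1 := ⟨k - 1, by omega⟩
  obtain ⟨a, rfl⟩ : ∃ a, p = a + (j + 1) := ⟨p - (j + 1), by omega⟩
  have e1 : a + (j + 1) - (j + 1) = a := by omega
  have e2 : a + (j + 1) + (j + 1) = a + 2 * j + 2 := by omega
  have e3 : a + (j + 1) + (j + 1) - 1 = a + 2 * j + 1 := by omega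
  have e4 : a + 2 * j + 2 - 1 = a + 2 * j + 1 := by omega
  simp only [e1, e2, e3, e4] at hA ⊢
  set P : ℝ := ((a + (j + 1) : ℕ) : ℝ) with hPdef
  have hP : (0 : ℝ) < P := by positivity
  have hF2 : (0 : ℝ) < ((a + 2 * j + 1).factorial : ℝ) := by positivity
  have hF1 : (0 : ℝ) < ((a).factorial : ℝ) := by positivity
  have hfs1 : ((a + 2 * j + 2).factorial : ℝ)
      = ((a : ℝ) + 2 * j + 2) * ((a + 2 * j + 1).factorial : ℝ) := by
    rw [show a + 2 * j + 2 = (a + 2 * j + 1) + 1 from rfl, Nat.factorial_succ]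
    push_cast; ring
  have hfs2 : ((a + 1).factorial : ℝ) = ((a : ℝ) + 1) * (a.factorial : ℝ) := by
    rw [Nat.factorial_succ]; push_cast; ring
  -- B ≤ A
  have hB : (1 / (P * (P + 1))) * (((a + 1).factorial : ℝ) / ((a + 2 * j + 1).factorial : ℝ))
      ≤ (a.factorial : ℝ) / ((a + 2 * j + 2).factorial : ℝ) := by
    rw [hfs2, hfs1, one_div_mul_eq_div, div_div]
    rw [div_le_div_iff₀ (by positivity) (by positivity)]
    have hcoef : ((a : ℝ) + 1) * ((a : ℝ) + 2 * j + 2) ≤ P * (P + 1) := by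
      rw [hPdef]; push_cast; nlinarith [sq_nonneg (j : ℝ), (by positivity : (0:ℝ) ≤ (j:ℝ))]
    calc ((a : ℝ) + 1) * (a.factorial : ℝ) * (((a : ℝ) + 2 * j + 2) * ((a + 2 * j + 1).factorial : ℝ))
        = (((a : ℝ) + 1) * ((a : ℝ) + 2 * j + 2)) * ((a.factorial : ℝ) * ((a + 2 * j + 1).factorial : ℝ)) := by
          ring
      _ ≤ (P * (P + 1)) * ((a.factorial : ℝ) * ((a + 2 * j + 1).factorial : ℝ)) := by
          apply mul_le_mul_of_nonneg_right hcoef (by positivity)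
      _ = (a.factorial : ℝ) * (((a + 2 * j + 1).factorial : ℝ) * (P * (P + 1))) := by ring
  -- 4 e^k / p^2k ≤ rhs
  have hfour : (4 : ℝ) * (Real.exp 1 ^ (j + 1) / P ^ (2 * (j + 1)))
      ≤ Real.exp 1 ^ (2 * (j + 1) + 1) * P ^ (-(2 * ((j + 1 : ℕ) : ℤ))) := by
    have hzp : P ^ (-(2 * ((j + 1 : ℕ) : ℤ))) = (P ^ (2 * (j + 1)))⁻¹ := by
      rw [show (-(2 * ((j + 1 : ℕ) : ℤ))) = -((2 * (j + 1) : ℕ) : ℤ) by push_cast; ring,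
        zpow_neg, zpow_natCast]
    rw [hzp, div_eq_mul_inv]
    have he : (2 : ℝ) ≤ Real.exp 1 := by
      have := Real.exp_one_gt_d9; nlinarith
    have h4 : (4 : ℝ) * Real.exp 1 ^ (j + 1) ≤ Real.exp 1 ^ (2 * (j + 1) + 1) := by
      have hpow : Real.exp 1 ^ (2 * (j + 1) + 1)
          = Real.exp 1 ^ (j + 2) * Real.exp 1 ^ (j + 1) := by
        rw [← pow_add]; ring_nf
      rw [hpow]
      apply mul_le_mul_of_nonneg_right _ (by positivity)
      calc (4 : ℝ) = 2 ^ 2 := by norm_num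
        _ ≤ (2 : ℝ) ^ (j + 2) := by
            apply pow_le_pow_right₀ (by norm_num) (by omega)
        _ ≤ Real.exp 1 ^ (j + 2) := by
            apply pow_le_pow_left₀ (by norm_num) he
    calc (4 : ℝ) * (Real.exp 1 ^ (j + 1) * (P ^ (2 * (j + 1)))⁻¹)
        = (4 * Real.exp 1 ^ (j + 1)) * (P ^ (2 * (j + 1)))⁻¹ := by ring
      _ ≤ Real.exp 1 ^ (2 * (j + 1) + 1) * (P ^ (2 * (j + 1)))⁻¹ := by
          apply mul_le_mul_of_nonneg_right h4 (by positivity)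
  calc 2 * ((a.factorial : ℝ) / ((a + 2 * j + 2).factorial : ℝ) +
        (1 / (P * (P + 1))) * (((a + 1).factorial : ℝ) / ((a + 2 * j + 1).factorial : ℝ)))
      ≤ 2 * ((a.factorial : ℝ) / ((a + 2 * j + 2).factorial : ℝ) +
        (a.factorial : ℝ) / ((a + 2 * j + 2).factorial : ℝ)) := by
        have := hB; linarith
    _ = 4 * ((a.factorial : ℝ) / ((a + 2 * j + 2).factorial : ℝ)) := by ring
    _ ≤ 4 * (Real.exp 1 ^ (j + 1) / P ^ (2 * (j + 1))) := by
        apply mul_le_mul_of_nonneg_left hA (by norm_num)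
    _ ≤ Real.exp 1 ^ (2 * (j + 1) + 1) * P ^ (-(2 * ((j + 1 : ℕ) : ℤ))) := hfour
end

section
/- Let C₀ > 0, A > 0 and D > 0 be real constants, and let E : ℕ → ℝ be a sequence with E(p) ≥ 0 for all p, satisfying E(p) ≤ C₀ · (D/p)^s · A^{s+1} · (s+1)! for all natural numbers s and p with 1 ≤ s and 2s ≤ p. Then there exist constants C > 0 and b > 0 such that E(p) ≤ C · e^{−b p} for every natural number p ≥ 2. -/
/-!
Take `s = ⌊p / K⌋` for a fixed integer `K ≥ max 2 (8DA)`. Then `s ≥ 1`, `2s ≤ p` and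
`DA(s+1)/p ≤ 2DA/K ≤ 1/4`, so with `(s+1)! ≤ (s+1)^(s+1)` and `s + 1 ≤ 2^s` the assumed bound
becomes `C₀ A (1/2)^s`. Since `p ≤ 2Ks`, this is at most `C₀ A e^{-bp}` with `b = log 2 / (2K)`
for every `p ≥ K`; the finitely many smaller `p` are absorbed into the constant.
-/

open Real

theorem pow_mul_factorial_succ_le_half_pow {x : ℝ} {s : ℕ} (hx : 0 ≤ x)
    (hxs : x * (s + 1) ≤ 1 / 4) : x ^ s * ((s + 1).factorial : ℝ) ≤ (1 / 2) ^ s := by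
  have hfact : ((s + 1).factorial : ℝ) ≤ ((s : ℝ) + 1) ^ (s + 1) := by
    exact_mod_cast Nat.factorial_le_pow (s + 1)
  have htwo : (s : ℝ) + 1 ≤ 2 ^ s := by exact_mod_cast Nat.lt_two_pow_self (n := s)
  calc x ^ s * ((s + 1).factorial : ℝ)
      ≤ x ^ s * ((s : ℝ) + 1) ^ (s + 1) := by gcongr
    _ = ((s : ℝ) + 1) * (x * (s + 1)) ^ s := by rw [mul_pow, pow_succ']; ring
    _ ≤ 2 ^ s * (x * (s + 1)) ^ s := by gcongr
    _ = (2 * (x * (s + 1))) ^ s := (mul_pow _ _ _).symm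
    _ ≤ (1 / 2) ^ s := by gcongr; linarith

theorem half_pow_le_exp_neg {K p s : ℕ} (hK : 0 < K) (hp : p ≤ 2 * K * s) :
    (1 / 2 : ℝ) ^ s ≤ exp (-(log 2 / (2 * K)) * p) := by
  have hK' : (0 : ℝ) < 2 * K := by positivity
  have hp' : (p : ℝ) ≤ 2 * K * s := by exact_mod_cast hp
  rw [← exp_log (by norm_num : (0 : ℝ) < 1 / 2), ← exp_nat_mul, exp_le_exp, one_div, log_inv]
  have : log 2 / (2 * K) * p ≤ s * log 2 := by
    rw [div_mul_eq_mul_div, div_le_iff₀ hK']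
    nlinarith [log_pos (by norm_num : (1 : ℝ) < 2)]
  linarith

theorem exists_exp_bound_of_eventually_le {E : ℕ → ℝ} {C b : ℝ} {N : ℕ} (hC : 0 < C) (hb : 0 ≤ b)
    (h : ∀ p, N ≤ p → E p ≤ C * exp (-b * p)) :
    ∃ C' : ℝ, 0 < C' ∧ ∀ p, E p ≤ C' * exp (-b * p) := by
  set M := ∑ q ∈ Finset.range N, |E q|
  have hM : 0 ≤ M := Finset.sum_nonneg fun q _ => abs_nonneg (E q)
  refine ⟨C + M * exp (b * N), by positivity, fun p => ?_⟩
  rcases lt_or_ge p N with hpN | hpN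
  · have hEM : E p ≤ M :=
      (le_abs_self _).trans (Finset.single_le_sum (fun q _ => abs_nonneg (E q))
        (Finset.mem_range.mpr hpN))
    have hone : 1 ≤ exp (b * N) * exp (-b * p) := by
      rw [← exp_add, one_le_exp_iff]
      nlinarith [(Nat.cast_le (α := ℝ)).mpr hpN.le]
    nlinarith [exp_pos (-b * p)]
  · have : 0 ≤ M * exp (b * N) * exp (-b * p) := by positivity
    nlinarith [h p hpN]

theorem le_mul_exp_of_factorial_bounds {C₀ A D : ℝ} (hC₀ : 0 ≤ C₀) (hA : 0 ≤ A) (hD : 0 ≤ D)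
    {E : ℕ → ℝ} (hE : ∀ s p : ℕ, 1 ≤ s → 2 * s ≤ p →
      E p ≤ C₀ * (D / (p : ℝ)) ^ s * A ^ (s + 1) * (Nat.factorial (s + 1) : ℝ))
    {K : ℕ} (hK : 2 ≤ K) (hKDA : 8 * D * A ≤ K) (p : ℕ) (hp : K ≤ p) :
    E p ≤ C₀ * A * exp (-(log 2 / (2 * K)) * p) := by
  set s := p / K
  have hK0 : 0 < K := by omega
  have hs1 : 1 ≤ s := (Nat.le_div_iff_mul_le hK0).2 (by omega)
  have hsK : s * K ≤ p := Nat.div_mul_le_self p K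
  have hlt : p < s * K + K := Nat.lt_div_mul_add hK0
  have hsmall : D * A / p * (s + 1) ≤ 1 / 4 := by
    have hp0 : (0 : ℝ) < p := by exact_mod_cast (show 0 < p by omega)
    have hsucc : ((s : ℝ) + 1) * K ≤ 2 * p := by
      exact_mod_cast (show (s + 1) * K ≤ 2 * p by nlinarith)
    rw [div_mul_eq_mul_div, div_le_iff₀ hp0]
    nlinarith [mul_le_mul_of_nonneg_left hsucc (mul_nonneg hD hA)]
  calc E p ≤ C₀ * (D / p) ^ s * A ^ (s + 1) * ((s + 1).factorial : ℝ) :=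
        hE s p hs1 (by nlinarith)
    _ = C₀ * A * ((D * A / p) ^ s * ((s + 1).factorial : ℝ)) := by ring
    _ ≤ C₀ * A * (1 / 2) ^ s := by
        gcongr
        exact pow_mul_factorial_succ_le_half_pow (by positivity) hsmall
    _ ≤ C₀ * A * exp (-(log 2 / (2 * K)) * p) := by
        gcongr
        exact half_pow_le_exp_neg hK0 (by nlinarith)

theorem exponential_decay_of_analytic_type_bounds_general
    (C₀ A D : ℝ) (hC₀ : 0 < C₀) (hA : 0 < A) (hD : 0 < D)
    (E : ℕ → ℝ)
    (hE : ∀ s p : ℕ, 1 ≤ s → 2 * s ≤ p →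
      E p ≤ C₀ * (D / (p : ℝ)) ^ s * A ^ (s + 1) * (Nat.factorial (s + 1) : ℝ)) :
    ∃ C : ℝ, 0 < C ∧ ∃ b : ℝ, 0 < b ∧
      ∀ p : ℕ, 2 ≤ p → E p ≤ C * Real.exp (-b * (p : ℝ)) := by
  set K := ⌈8 * D * A⌉₊ + 2
  have hKDA : 8 * D * A ≤ K := by
    have := Nat.le_ceil (8 * D * A)
    push_cast [K]; linarith
  have hb : 0 < log 2 / (2 * K) := div_pos (log_pos one_lt_two) (by positivity)
  obtain ⟨C, hC, hbound⟩ := exists_exp_bound_of_eventually_le (mul_pos hC₀ hA) hb.le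
    (le_mul_exp_of_factorial_bounds hC₀.le hA.le hD.le hE (by omega) hKDA)
  exact ⟨C, hC, _, hb, fun p _ => hbound p⟩

/-- If a nonnegative sequence `E : ℕ → ℝ` satisfies
`E p ≤ C₀ · (D/p)^s · A^{s+1} · (s+1)!` for all natural numbers `s, p` with `1 ≤ s` and
`2s ≤ p`, then `E` decays exponentially: there are `C > 0` and `b > 0` such that
`E p ≤ C · e^{−bp}` for all natural numbers `p ≥ 2`. -/
theorem exponential_decay_of_analytic_type_bounds
    (C₀ A D : ℝ) (hC₀ : 0 < C₀) (hA : 0 < A) (hD : 0 < D)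
    (E : ℕ → ℝ) (hE_nonneg : ∀ p, 0 ≤ E p)
    (hE : ∀ s p : ℕ, 1 ≤ s → 2 * s ≤ p →
      E p ≤ C₀ * (D / (p : ℝ)) ^ s * A ^ (s + 1) * (Nat.factorial (s + 1) : ℝ)) :
    ∃ C : ℝ, 0 < C ∧ ∃ b : ℝ, 0 < b ∧
      ∀ p : ℕ, 2 ≤ p → E p ≤ C * Real.exp (-b * (p : ℝ)) :=
  exponential_decay_of_analytic_type_bounds_general C₀ A D hC₀ hA hD E hE
end
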